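/- arXiv:2602.12034 — 2 statements merged into one kernel-verified Lean document; each statement's English description precedes it below -/
import Mathlib

section
/- For the Kepler Hamiltonian H(q,p) = |p|²/2 − 1/|q| and K₋(q,p) = |q|(|p|²−1) − 2, the canonical Poisson bracket satisfies {K₋, H} = (⟨q,p⟩/|q|²)·K₋(q,p), so {K₋,H} vanishes on K₋⁻¹(0) = H⁻¹(1/2). -/
open scoped RealInnerProductSpace

noncomputable section

abbrev E3 := EuclideanSpace ℝ (Fin 3)

/-- Canonical Poisson bracket on T*(ℝ³): {F,G} = Σᵢ (∂F/∂qᵢ ∂G/∂pᵢ − ∂F/∂pᵢ ∂G/∂qᵢ). -/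
def poissonBracket (F G : E3 × E3 → ℝ) (q p : E3) : ℝ :=
  ∑ i : Fin 3,
    (deriv (fun t : ℝ => F (q + t • EuclideanSpace.single i 1, p)) 0 *
       deriv (fun t : ℝ => G (q, p + t • EuclideanSpace.single i 1)) 0 -
     deriv (fun t : ℝ => F (q, p + t • EuclideanSpace.single i 1)) 0 *
       deriv (fun t : ℝ => G (q + t • EuclideanSpace.single i 1, p)) 0)

/-- Kepler Hamiltonian H(q,p) = |p|²/2 − 1/|q|. -/
def keplerH (qp : E3 × E3) : ℝ := ‖qp.2‖ ^ 2 / 2 - ‖qp.1‖⁻¹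

/-- K₊(q,p) = |q|(|p|²−1) − 2. -/
def Kminus (qp : E3 × E3) : ℝ := ‖qp.1‖ * (‖qp.2‖ ^ 2 - 1) - 2

lemma hasDerivAt_norm_sq (p v : E3) :
    HasDerivAt (fun t : ℝ => ‖p + t • v‖ ^ 2) (2 * ⟪p, v⟫) 0 := by
  have h : (fun t : ℝ => ‖p + t • v‖ ^ 2)
      = fun t : ℝ => ‖p‖ ^ 2 + 2 * ⟪p, v⟫ * t + ‖v‖ ^ 2 * t ^ 2 := by
    funext t
    rw [norm_add_sq_real, real_inner_smul_right, norm_smul]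
    simp [mul_pow, sq_abs]
    ring
  rw [h]
  have h2 : HasDerivAt (fun t : ℝ => ‖p‖ ^ 2 + 2 * ⟪p, v⟫ * t + ‖v‖ ^ 2 * t ^ 2)
      (0 + 2 * ⟪p, v⟫ * 1 + ‖v‖ ^ 2 * (↑2 * 0 ^ 1)) 0 :=
    ((hasDerivAt_const _ _).add ((hasDerivAt_id 0).const_mul _)).add
      ((hasDerivAt_pow 2 0).const_mul _)
  simpa using h2

lemma hasDerivAt_norm (q v : E3) (hq : q ≠ 0) :
    HasDerivAt (fun t : ℝ => ‖q + t • v‖) (⟪q, v⟫ / ‖q‖) 0 := by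
  have hn : ‖q‖ ≠ 0 := norm_ne_zero_iff.mpr hq
  have hx : (‖q‖ : ℝ) ^ 2 ≠ 0 := pow_ne_zero _ hn
  have h0 : ‖q + (0:ℝ) • v‖ ^ 2 = ‖q‖ ^ 2 := by simp
  have hg : HasDerivAt Real.sqrt (1 / (2 * Real.sqrt (‖q‖ ^ 2)))
      ((fun t : ℝ => ‖q + t • v‖ ^ 2) 0) := by
    simp only [h0]
    exact Real.hasDerivAt_sqrt hx
  have hs := hg.comp 0 (hasDerivAt_norm_sq q v)
  have heq : (Real.sqrt ∘ fun t : ℝ => ‖q + t • v‖ ^ 2) = fun t : ℝ => ‖q + t • v‖ := by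
    funext t; exact Real.sqrt_sq (norm_nonneg _)
  rw [heq] at hs
  refine hs.congr_deriv ?_
  rw [Real.sqrt_sq (norm_nonneg q)]
  field_simp


lemma deriv_K_q (q p v : E3) (hq : q ≠ 0) :
    deriv (fun t : ℝ => Kminus (q + t • v, p)) 0 = ⟪q, v⟫ / ‖q‖ * (‖p‖ ^ 2 - 1) := by
  have h : HasDerivAt (fun t : ℝ => ‖q + t • v‖ * (‖p‖ ^ 2 - 1) - 2)
      (⟪q, v⟫ / ‖q‖ * (‖p‖ ^ 2 - 1)) 0 :=
    ((hasDerivAt_norm q v hq).mul_const _).sub_const 2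
  exact h.deriv

lemma deriv_K_p (q p v : E3) :
    deriv (fun t : ℝ => Kminus (q, p + t • v)) 0 = ‖q‖ * (2 * ⟪p, v⟫) := by
  have h : HasDerivAt (fun t : ℝ => ‖q‖ * (‖p + t • v‖ ^ 2 - 1) - 2)
      (‖q‖ * (2 * ⟪p, v⟫)) 0 :=
    (((hasDerivAt_norm_sq p v).sub_const 1).const_mul ‖q‖).sub_const 2
  exact h.deriv

lemma deriv_H_q (q p v : E3) (hq : q ≠ 0) :
    deriv (fun t : ℝ => keplerH (q + t • v, p)) 0 = ⟪q, v⟫ / ‖q‖ ^ 3 := by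
  have hn : ‖q‖ ≠ 0 := norm_ne_zero_iff.mpr hq
  have h0 : ‖q + (0:ℝ) • v‖ ≠ 0 := by simpa using hn
  have h : HasDerivAt (fun t : ℝ => ‖p‖ ^ 2 / 2 - ‖q + t • v‖⁻¹)
      (-(-(⟪q, v⟫ / ‖q‖) / ‖q + (0:ℝ) • v‖ ^ 2)) 0 :=
    ((hasDerivAt_norm q v hq).inv h0).const_sub _
  have := h.deriv
  rw [show (fun t : ℝ => keplerH (q + t • v, p)) =
      (fun t : ℝ => ‖p‖ ^ 2 / 2 - ‖q + t • v‖⁻¹) from rfl, this]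
  simp only [zero_smul, add_zero]
  rw [neg_div, neg_neg, div_div]
  ring_nf

lemma deriv_H_p (q p v : E3) :
    deriv (fun t : ℝ => keplerH (q, p + t • v)) 0 = ⟪p, v⟫ := by
  have h : HasDerivAt (fun t : ℝ => ‖p + t • v‖ ^ 2 / 2 - ‖q‖⁻¹)
      (2 * ⟪p, v⟫ / 2) 0 :=
    ((hasDerivAt_norm_sq p v).div_const 2).sub_const _
  have := h.deriv
  rw [show (fun t : ℝ => keplerH (q, p + t • v)) =
      (fun t : ℝ => ‖p + t • v‖ ^ 2 / 2 - ‖q‖⁻¹) from rfl, this]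
  ring

theorem kminus_poisson (q p : E3) (hq : q ≠ 0) :
    poissonBracket Kminus keplerH q p = (⟪q, p⟫ / ‖q‖ ^ 2) * Kminus (q, p) ∧
    (Kminus (q, p) = 0 ↔ keplerH (q, p) = 1 / 2) ∧
    (Kminus (q, p) = 0 → poissonBracket Kminus keplerH q p = 0) := by
  have hn : ‖q‖ ≠ 0 := norm_ne_zero_iff.mpr hq
  have hmain : poissonBracket Kminus keplerH q p = (⟪q, p⟫ / ‖q‖ ^ 2) * Kminus (q, p) := by
    have hip : ⟪q, p⟫ = ∑ i : Fin 3, q i * p i := by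
      simp [PiLp.inner_apply, RCLike.inner_apply]
      exact Finset.sum_congr rfl fun i _ => mul_comm _ _
    unfold poissonBracket
    rw [hip]
    rw [Finset.sum_div, Finset.sum_mul]
    refine Finset.sum_congr rfl fun i _ => ?_
    rw [deriv_K_q q p _ hq, deriv_K_p, deriv_H_q q p _ hq, deriv_H_p]
    have hqi : ⟪q, EuclideanSpace.single i (1:ℝ)⟫ = q i := by
      simp [EuclideanSpace.inner_single_right]
    have hpi : ⟪p, EuclideanSpace.single i (1:ℝ)⟫ = p i := by
      simp [EuclideanSpace.inner_single_right]
    rw [hqi, hpi]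
    simp only [Kminus]
    field_simp
  have hK : Kminus (q, p) = ‖q‖ * (‖p‖ ^ 2 - 1) - 2 := rfl
  have hH : keplerH (q, p) = ‖p‖ ^ 2 / 2 - ‖q‖⁻¹ := rfl
  refine ⟨hmain, ?_, fun h => by rw [hmain, h, mul_zero]⟩
  rw [hK, hH]
  constructor
  · intro h
    field_simp
    nlinarith [h]
  · intro h
    field_simp at h
    nlinarith [h]
end
end

section
/- For the Kepler Hamiltonian H(q,p) = |p|²/2 − 1/|q| and K₀(q,p) = |q||p|² − 2, the canonical Poisson bracket satisfies {K₀, H} = (⟨q,p⟩/|q|²)·K₀(q,p); moreover on K₀⁻¹(0) the Hamiltonian vector fields satisfy X_{K₀} = 2|q|·X_H. -/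
open scoped RealInnerProductSpace

noncomputable section

lemma hasFDerivAt_norm' {x : E3} (hx : x ≠ 0) :
    HasFDerivAt (fun y : E3 => ‖y‖) (‖x‖⁻¹ • innerSL ℝ x) x := by
  have h1 : HasFDerivAt (fun y : E3 => ‖y‖ ^ 2) (2 • innerSL ℝ x) x :=
    (hasStrictFDerivAt_norm_sq x).hasFDerivAt
  have hpos : (0:ℝ) < ‖x‖ ^ 2 := pow_pos (norm_pos_iff.mpr hx) 2
  have h2 : HasDerivAt Real.sqrt (1 / (2 * Real.sqrt (‖x‖ ^ 2))) (‖x‖ ^ 2) :=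
    Real.hasDerivAt_sqrt (ne_of_gt hpos)
  have h3 := h2.comp_hasFDerivAt x h1
  have hfun : (Real.sqrt ∘ fun y : E3 => ‖y‖ ^ 2) = fun y : E3 => ‖y‖ := by
    funext y; simp [Function.comp, Real.sqrt_sq (norm_nonneg y)]
  rw [hfun] at h3
  refine h3.congr_fderiv ?_
  rw [Real.sqrt_sq (norm_nonneg x)]
  ext y
  have hn : ‖x‖ ≠ 0 := norm_ne_zero_iff.mpr hx
  simp only [ContinuousLinearMap.coe_smul', Pi.smul_apply, smul_eq_mul]
  ring

lemma hasDerivAt_norm_line {x : E3} (v : E3) (hx : x ≠ 0) :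
    HasDerivAt (fun t : ℝ => ‖x + t • v‖) (⟪x, v⟫ / ‖x‖) 0 := by
  have hc : HasDerivAt (fun t : ℝ => x + t • v) v 0 := by
    simpa using ((hasDerivAt_id (0:ℝ)).smul_const v).const_add x
  have h := hasFDerivAt_norm' (x := x) hx
  have h0 : x = x + (0:ℝ) • v := by simp
  rw [h0] at h
  have h2 := h.comp_hasDerivAt (0:ℝ) hc
  refine h2.congr_deriv ?_
  simp [div_eq_inv_mul]

lemma hasDerivAt_normsq_line (x v : E3) :
    HasDerivAt (fun t : ℝ => ‖x + t • v‖ ^ 2) (2 * ⟪x, v⟫) 0 := by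
  have hc : HasDerivAt (fun t : ℝ => x + t • v) v 0 := by
    simpa using ((hasDerivAt_id (0:ℝ)).smul_const v).const_add x
  simpa using hc.norm_sq

/-- K₀(q,p) = |q||p|² − 2. -/
def Kzero (qp : E3 × E3) : ℝ := ‖qp.1‖ * ‖qp.2‖ ^ 2 - 2

set_option maxHeartbeats 1000000 in
theorem kzero_poisson_and_vf (q p : E3) (hq : q ≠ 0) :
    poissonBracket Kzero keplerH q p = (⟪q, p⟫ / ‖q‖ ^ 2) * Kzero (q, p) ∧
    (Kzero (q, p) = 0 →
      -- X_{K₀} = 2|q| X_H : both components of the Hamiltonian vector field agree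
      gradient (fun p' : E3 => Kzero (q, p')) p =
        (2 * ‖q‖) • gradient (fun p' : E3 => keplerH (q, p')) p ∧
      gradient (fun q' : E3 => Kzero (q', p)) q =
        (2 * ‖q‖) • gradient (fun q' : E3 => keplerH (q', p)) q) := by
  have hn : ‖q‖ ≠ 0 := norm_ne_zero_iff.mpr hq
  have hsingle : ∀ i : Fin 3, ⟪q, EuclideanSpace.single i 1⟫ = q i := fun i => by
    simp [EuclideanSpace.inner_single_right]
  constructor
  · -- Poisson bracket identity
    have hA : ∀ i : Fin 3,
        deriv (fun t : ℝ => Kzero (q + t • EuclideanSpace.single i 1, p)) 0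
          = q i / ‖q‖ * ‖p‖ ^ 2 := by
      intro i
      have h := ((hasDerivAt_norm_line (EuclideanSpace.single i 1) hq).mul_const
        (‖p‖ ^ 2)).sub_const 2
      have h2 : HasDerivAt (fun t : ℝ => Kzero (q + t • EuclideanSpace.single i 1, p))
          (⟪q, EuclideanSpace.single i 1⟫ / ‖q‖ * ‖p‖ ^ 2) 0 := h
      rw [h2.deriv, hsingle i]
    have hB : ∀ i : Fin 3,
        deriv (fun t : ℝ => keplerH (q, p + t • EuclideanSpace.single i 1)) 0 = p i := by
      intro i
      have h := ((hasDerivAt_normsq_line p (EuclideanSpace.single i 1)).div_const 2).sub_const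
        (‖q‖⁻¹)
      have h2 : HasDerivAt (fun t : ℝ => keplerH (q, p + t • EuclideanSpace.single i 1))
          (2 * ⟪p, EuclideanSpace.single i 1⟫ / 2) 0 := h
      rw [h2.deriv]
      have : ⟪p, EuclideanSpace.single i 1⟫ = p i := by
        simp [EuclideanSpace.inner_single_right]
      rw [this]; ring
    have hC : ∀ i : Fin 3,
        deriv (fun t : ℝ => Kzero (q, p + t • EuclideanSpace.single i 1)) 0
          = ‖q‖ * (2 * p i) := by
      intro i
      have h := ((hasDerivAt_normsq_line p (EuclideanSpace.single i 1)).const_mul ‖q‖).sub_const 2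
      have h2 : HasDerivAt (fun t : ℝ => Kzero (q, p + t • EuclideanSpace.single i 1))
          (‖q‖ * (2 * ⟪p, EuclideanSpace.single i 1⟫)) 0 := h
      rw [h2.deriv]
      have : ⟪p, EuclideanSpace.single i 1⟫ = p i := by
        simp [EuclideanSpace.inner_single_right]
      rw [this]
    have hD : ∀ i : Fin 3,
        deriv (fun t : ℝ => keplerH (q + t • EuclideanSpace.single i 1, p)) 0
          = q i / ‖q‖ ^ 3 := by
      intro i
      have hnl := hasDerivAt_norm_line (x := q) (EuclideanSpace.single i 1) hq
      have hinv := hnl.inv (by simpa using hn)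
      have h := hinv.const_sub (‖p‖ ^ 2 / 2)
      have h2 : HasDerivAt (fun t : ℝ => keplerH (q + t • EuclideanSpace.single i 1, p))
          (-(-(⟪q, EuclideanSpace.single i 1⟫ / ‖q‖) / ‖q + (0:ℝ) • EuclideanSpace.single i 1‖ ^ 2)) 0 := h
      rw [h2.deriv, hsingle i]
      simp only [zero_smul, add_zero]
      rw [neg_div, neg_neg, div_div]
      ring_nf
    unfold poissonBracket
    have hsum : ∀ i : Fin 3,
        (deriv (fun t : ℝ => Kzero (q + t • EuclideanSpace.single i 1, p)) 0 *
          deriv (fun t : ℝ => keplerH (q, p + t • EuclideanSpace.single i 1)) 0 -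
        deriv (fun t : ℝ => Kzero (q, p + t • EuclideanSpace.single i 1)) 0 *
          deriv (fun t : ℝ => keplerH (q + t • EuclideanSpace.single i 1, p)) 0)
        = q i * p i * (‖p‖ ^ 2 / ‖q‖ - 2 / ‖q‖ ^ 2) := by
      intro i
      rw [hA i, hB i, hC i, hD i]
      field_simp
    rw [Finset.sum_congr rfl (fun i _ => hsum i), ← Finset.sum_mul]
    have hip : ⟪q, p⟫ = ∑ i, q i * p i := by
      simp [PiLp.inner_apply, RCLike.inner_apply]
      exact Finset.sum_congr rfl (fun i _ => mul_comm _ _)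
    rw [← hip]
    unfold Kzero
    field_simp
  · -- vector field identity on K₀ = 0
    intro hK
    have hK' : ‖q‖ * ‖p‖ ^ 2 = 2 := by
      have : ‖q‖ * ‖p‖ ^ 2 - 2 = 0 := hK
      linarith
    -- gradient computations
    have ga : gradient (fun p' : E3 => Kzero (q, p')) p = (2 * ‖q‖) • p := by
      have hf : HasFDerivAt (fun p' : E3 => Kzero (q, p'))
          (‖q‖ • (2 • innerSL ℝ p)) p :=
        (((hasStrictFDerivAt_norm_sq p).hasFDerivAt.const_mul ‖q‖).sub_const 2 :)
      have hL : ‖q‖ • (2 • innerSL ℝ p) = (InnerProductSpace.toDual ℝ E3) ((2 * ‖q‖) • p) := by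
        ext y
        simp [inner_smul_left, real_inner_smul_left]
        ring
      rw [hL] at hf
      exact (hasGradientAt_iff_hasFDerivAt.mpr hf).gradient
    have gb : gradient (fun p' : E3 => keplerH (q, p')) p = p := by
      have hf : HasFDerivAt (fun p' : E3 => keplerH (q, p'))
          ((2:ℝ)⁻¹ • (2 • innerSL ℝ p)) p := by
        have h0 := (((hasStrictFDerivAt_norm_sq p).hasFDerivAt.const_mul
          ((2:ℝ)⁻¹)).sub_const (‖q‖⁻¹))
        have e : (fun p' : E3 => keplerH (q, p')) = fun p' : E3 => (2:ℝ)⁻¹ * ‖p'‖ ^ 2 - ‖q‖⁻¹ := by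
          funext p'; unfold keplerH; ring
        rw [e]; exact h0
      have hL : (2:ℝ)⁻¹ • (2 • innerSL ℝ p) = (InnerProductSpace.toDual ℝ E3) p := by
        ext y
        simp
      rw [hL] at hf
      exact (hasGradientAt_iff_hasFDerivAt.mpr hf).gradient
    have gc : gradient (fun q' : E3 => Kzero (q', p)) q = (‖p‖ ^ 2 / ‖q‖) • q := by
      have hf : HasFDerivAt (fun q' : E3 => Kzero (q', p))
          (‖p‖ ^ 2 • (‖q‖⁻¹ • innerSL ℝ q)) q := by
        have := ((hasFDerivAt_norm' hq).mul_const (‖p‖ ^ 2)).sub_const 2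
        exact this
      have hL : ‖p‖ ^ 2 • (‖q‖⁻¹ • innerSL ℝ q)
          = (InnerProductSpace.toDual ℝ E3) ((‖p‖ ^ 2 / ‖q‖) • q) := by
        ext y
        simp [real_inner_smul_left]
        ring
      rw [hL] at hf
      exact (hasGradientAt_iff_hasFDerivAt.mpr hf).gradient
    have gd : gradient (fun q' : E3 => keplerH (q', p)) q = (‖q‖ ^ 3)⁻¹ • q := by
      have hinv := (hasDerivAt_inv hn).comp_hasFDerivAt q (hasFDerivAt_norm' hq)
      have hf0 := hinv.const_sub (‖p‖ ^ 2 / 2)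
      have hf : HasFDerivAt (fun q' : E3 => keplerH (q', p))
          (-(-(‖q‖ ^ 2)⁻¹ • (‖q‖⁻¹ • innerSL ℝ q))) q := by
        exact hf0
      have hL : -(-(‖q‖ ^ 2)⁻¹ • (‖q‖⁻¹ • innerSL ℝ q))
          = (InnerProductSpace.toDual ℝ E3) ((‖q‖ ^ 3)⁻¹ • q) := by
        ext y
        have hc : (‖q‖ ^ 2)⁻¹ * ‖q‖⁻¹ = (‖q‖ ^ 3)⁻¹ := by
          rw [← mul_inv]; ring_nf
        simp [real_inner_smul_left, ← hc]
        ring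
      rw [hL] at hf
      exact (hasGradientAt_iff_hasFDerivAt.mpr hf).gradient
    refine ⟨by rw [ga, gb], ?_⟩
    rw [gc, gd, smul_smul]
    congr 1
    field_simp
    linear_combination hK'

end
end
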